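/- arXiv:1303.3555 — 2 statements merged into one kernel-verified Lean document; each statement's English description precedes it below -/
import Mathlib

section
/- For any nonzero vector x in ℝ^{n-1} and any real Q ≥ 1, there exist a positive integer q and an integer vector p in ℤ^{n-1} such that |qx - p| ≤ Q^{-1} (in the supremum norm) and 1 ≤ q ≤ Q^{n-1}. -/
/-!
Box principle on the torus `(ℝ/Tℤ)^d` with the sup norm: the `N + 1 = ⌊Q^d⌋ + 1` closed balls of
radius `T/(2Q)` around `0, ξ, …, N • ξ` each have volume `(T/Q)^d`, so their total volume is at
least that of the torus. Since the torus is connected, two of them meet, and the difference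
`q • ξ` of their centres, `1 ≤ q ≤ N`, has norm at most `T/Q`. For `T = 1` and `ξ = x mod ℤ` the norm is the distance to the
nearest integer, so `p = round (q x)`.
-/

open MeasureTheory Metric

namespace AddCircle

variable {T : ℝ} [Fact (0 < T)] {ι : Type*} [Fintype ι]

theorem volume_closedBall_pi (x : ι → AddCircle T) {r : ℝ} (hr : 0 ≤ r) :
    volume (closedBall x r) = ENNReal.ofReal (min T (2 * r)) ^ Fintype.card ι := by
  simp [closedBall_pi x hr, volume_pi_pi, AddCircle.volume_closedBall]

theorem volume_univ_pi :
    volume (Set.univ : Set (ι → AddCircle T)) = ENNReal.ofReal T ^ Fintype.card ι := by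
  rw [← Set.pi_univ, volume_pi_pi]
  simp [AddCircle.measure_univ]

theorem exists_nsmul_norm_pi_le (ξ : ι → AddCircle T) {Q : ℝ} (hQ : 1 ≤ Q) :
    ∃ q : ℕ, 1 ≤ q ∧ (q : ℝ) ≤ Q ^ Fintype.card ι ∧ ‖q • ξ‖ ≤ T / Q := by
  set N := ⌊Q ^ Fintype.card ι⌋₊
  have hT : 0 < T := Fact.out
  have hN : 0 < N := Nat.floor_pos.mpr (one_le_pow₀ hQ)
  have hvol : volume (Set.univ : Set (ι → AddCircle T)) ≤
      (N + 1) • volume (closedBall (0 : ι → AddCircle T) (T / Q / 2)) := by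
    rw [volume_univ_pi, volume_closedBall_pi _ (by positivity), mul_div_cancel₀ _ two_ne_zero,
      min_eq_right (div_le_self hT.le hQ), nsmul_eq_mul, ← ENNReal.ofReal_pow hT.le,
      ← ENNReal.ofReal_pow (by positivity), ← ENNReal.ofReal_natCast,
      ← ENNReal.ofReal_mul (by positivity)]
    refine ENNReal.ofReal_le_ofReal ?_
    have hQN : Q ^ Fintype.card ι ≤ N + 1 := (Nat.lt_floor_add_one _).le
    rw [div_pow, mul_div_assoc', le_div_iff₀ (by positivity), mul_comm]
    exact mul_le_mul_of_nonneg_right (by exact_mod_cast hQN) (by positivity)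
  obtain ⟨q, ⟨hq1, hqN⟩, hq⟩ := NormedAddCommGroup.exists_norm_nsmul_le ξ hN (T / Q) hvol
  exact ⟨q, hq1, (Nat.cast_le.mpr hqN).trans (Nat.floor_le (by positivity)), hq⟩

end AddCircle

theorem Real.exists_nat_forall_abs_mul_sub_round_le {ι : Type*} [Fintype ι] (x : ι → ℝ) {Q : ℝ}
    (hQ : 1 ≤ Q) : ∃ q : ℕ, 1 ≤ q ∧ (q : ℝ) ≤ Q ^ Fintype.card ι ∧
      ∀ i, |(q : ℝ) * x i - round ((q : ℝ) * x i)| ≤ Q⁻¹ := by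
  obtain ⟨q, hq1, hqQ, hq⟩ :=
    AddCircle.exists_nsmul_norm_pi_le (T := 1) (fun i => (x i : AddCircle (1 : ℝ))) hQ
  refine ⟨q, hq1, hqQ, fun i => ?_⟩
  have hi := (norm_le_pi_norm (q • fun i => (x i : AddCircle (1 : ℝ))) i).trans hq
  rw [Pi.smul_apply, ← AddCircle.coe_nsmul, nsmul_eq_mul, AddCircle.norm_eq] at hi
  simpa using hi

theorem dirichlet_box_general (n : ℕ) (x : Fin (n - 1) → ℝ)
    (Q : ℝ) (hQ : 1 ≤ Q) :
    ∃ (q : ℕ) (p : Fin (n - 1) → ℤ), 1 ≤ q ∧ (q : ℝ) ≤ Q ^ (n - 1) ∧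
      ‖(fun i => (q : ℝ) * x i - (p i : ℝ))‖ ≤ Q⁻¹ := by
  obtain ⟨q, hq1, hqQ, hq⟩ := Real.exists_nat_forall_abs_mul_sub_round_le x hQ
  refine ⟨q, fun i => round ((q : ℝ) * x i), hq1, by simpa using hqQ, ?_⟩
  exact (pi_norm_le_iff_of_nonneg (by positivity)).mpr hq

/-- **Dirichlet's simultaneous approximation theorem.** For any nonzero
`x ∈ ℝ^{n-1}` and real `Q ≥ 1`, there exist `q ∈ ℕ`, `1 ≤ q ≤ Q^{n-1}`, and
`p ∈ ℤ^{n-1}` with `|q x - p| ≤ Q⁻¹` in the supremum norm. -/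
theorem dirichlet_box (n : ℕ) (hn : 2 ≤ n) (x : Fin (n - 1) → ℝ) (hx : x ≠ 0)
    (Q : ℝ) (hQ : 1 ≤ Q) :
    ∃ (q : ℕ) (p : Fin (n - 1) → ℤ), 1 ≤ q ∧ (q : ℝ) ≤ Q ^ (n - 1) ∧
      ‖(fun i => (q : ℝ) * x i - (p i : ℝ))‖ ≤ Q⁻¹ :=
  dirichlet_box_general n x Q hQ
end

section
/- Let τ ≥ 0 and let x ∈ [-1,1]^{n-1} satisfy: there exists γ > 0 such that for all nonzero k ∈ ℤ^{n-1}, the distance from k·x to ℤ is at least γ|k|^{-(1+τ)(n-1)}. Then there exists γ̄ > 0 such that for every positive integer q, the distance from qx to the lattice ℤ^{n-1} (in supremum norm) is at least γ̄ q^{-(1+(n-1)τ)/(n-1)}. -/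
/-!
Dirichlet's pigeonhole argument: with `d` coordinates and `K ≈ q^{1/d}`, two of the `(K+1)^d > q`
vectors with entries in `[0, K]` have the same value of `k·p` modulo `q`, so their difference is a
nonzero `k` with `|k| ≤ K` and `q ∣ k·p`. Then `q ‖k·x‖_ℤ ≤ |k·(qx - p)| ≤ d K ‖qx - p‖`, while
the linear hypothesis gives `‖k·x‖_ℤ ≥ γ K^{-s}`; hence `‖qx - p‖ ≥ γ q / (d K^{s+1})`, which is
`≫ q^{1 - (s+1)/d}`.
-/

open Finset

variable {ι : Type*} [Fintype ι]

theorem exists_ne_zero_abs_le_dvd_sum_mul (q K : ℕ) [NeZero q]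
    (hqK : q < (K + 1) ^ Fintype.card ι) (p : ι → ℤ) :
    ∃ k : ι → ℤ, k ≠ 0 ∧ (∀ i, |k i| ≤ K) ∧ (q : ℤ) ∣ ∑ i, k i * p i := by
  classical
  obtain ⟨a, b, hab, hf⟩ := Fintype.exists_ne_map_eq_of_card_lt
    (fun a : ι → Fin (K + 1) => ∑ i, ((a i : ℕ) : ZMod q) * p i) (by simpa using hqK)
  refine ⟨fun i => (a i : ℤ) - b i, fun h => hab (funext fun i => Fin.ext ?_), fun i => ?_, ?_⟩
  · simpa [sub_eq_zero] using congrFun h i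
  · have := (a i).is_lt; have := (b i).is_lt
    dsimp only; rw [abs_le]; constructor <;> omega
  · rw [← ZMod.intCast_zmod_eq_zero_iff_dvd]
    push_cast
    simp only [sub_mul, sum_sub_distrib]
    exact sub_eq_zero.mpr hf

theorem abs_sum_mul_le_card_mul_norm_mul_norm (u v : ι → ℝ) :
    |∑ i, u i * v i| ≤ Fintype.card ι * (‖u‖ * ‖v‖) := by
  calc |∑ i, u i * v i| ≤ ∑ i, |u i * v i| := abs_sum_le_sum_abs _ _
    _ ≤ ∑ _i : ι, ‖u‖ * ‖v‖ := by
      gcongr with i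
      rw [abs_mul]
      exact mul_le_mul (norm_le_pi_norm u i) (norm_le_pi_norm v i) (abs_nonneg _) (norm_nonneg _)
    _ = Fintype.card ι * (‖u‖ * ‖v‖) := by simp

theorem one_le_norm_intCast_of_ne_zero {k : ι → ℤ} (hk : k ≠ 0) :
    1 ≤ ‖fun i => (k i : ℝ)‖ := by
  obtain ⟨i, hi⟩ := Function.ne_iff.mp hk
  calc (1 : ℝ) ≤ |(k i : ℝ)| := by exact_mod_cast Int.one_le_abs hi
    _ ≤ ‖fun i => (k i : ℝ)‖ := norm_le_pi_norm (fun i => (k i : ℝ)) i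

theorem norm_intCast_le_of_abs_le {k : ι → ℤ} {K : ℕ} (hk : ∀ i, |k i| ≤ K) :
    ‖fun i => (k i : ℝ)‖ ≤ K :=
  (pi_norm_le_iff_of_nonneg K.cast_nonneg).mpr fun i => by
    rw [Real.norm_eq_abs, ← Int.cast_abs]; exact_mod_cast hk i

theorem exists_nat_lt_succ_pow_le_two_mul_rpow {d : ℕ} (hd : d ≠ 0) {q : ℕ} (hq : 1 ≤ q) :
    ∃ K : ℕ, q < (K + 1) ^ d ∧ (K : ℝ) ≤ 2 * (q : ℝ) ^ (d⁻¹ : ℝ) := by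
  set t : ℝ := (q : ℝ) ^ (d⁻¹ : ℝ)
  have ht : 1 ≤ t := Real.one_le_rpow (by exact_mod_cast hq) (by positivity)
  refine ⟨⌈t⌉₊, ?_, ?_⟩
  · have : (q : ℝ) < (⌈t⌉₊ + 1 : ℕ) ^ d := by
      calc (q : ℝ) = t ^ d := (Real.rpow_inv_natCast_pow q.cast_nonneg hd).symm
        _ < (⌈t⌉₊ + 1 : ℕ) ^ d := by
          gcongr
          push_cast
          linarith [Nat.le_ceil t]
    exact_mod_cast this
  · linarith [Nat.ceil_lt_add_one (zero_le_one.trans ht)]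

theorem mul_le_card_mul_rpow_mul_norm {x : ι → ℝ} {γ s : ℝ} (hs : 0 ≤ s)
    (hx : ∀ k : ι → ℤ, k ≠ 0 → ∀ m : ℤ,
      γ * ‖fun i => (k i : ℝ)‖ ^ (-s) ≤ |∑ i, k i * x i - m|)
    {q K : ℕ} (hq : 1 ≤ q) (hqK : q < (K + 1) ^ Fintype.card ι) (p : ι → ℤ) :
    γ * q ≤ Fintype.card ι * (K : ℝ) ^ (s + 1) * ‖fun i => q * x i - p i‖ := by
  have : NeZero q := ⟨by omega⟩
  obtain ⟨k, hk0, hkK, m, hm⟩ := exists_ne_zero_abs_le_dvd_sum_mul q K hqK p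
  set N := ‖fun i => (k i : ℝ)‖
  set err := |∑ i, k i * x i - m|
  have hN : 1 ≤ N := one_le_norm_intCast_of_ne_zero hk0
  have hNK : N ≤ K := norm_intCast_le_of_abs_le hkK
  have hlin : γ ≤ err * N ^ s := by
    have := hx k hk0 m
    rwa [Real.rpow_neg (by positivity), ← div_eq_mul_inv,
      div_le_iff₀ (Real.rpow_pos_of_pos (by positivity) s)] at this
  have hsim : q * err ≤ Fintype.card ι * (N * ‖fun i => q * x i - p i‖) := by
    have hid : (q : ℝ) * (∑ i, k i * x i - m) = ∑ i, (k i : ℝ) * (q * x i - p i) := by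
      have hm' : (q : ℝ) * m = ∑ i, (k i : ℝ) * p i := by exact_mod_cast hm.symm
      rw [mul_sub, hm', mul_sum, ← sum_sub_distrib]
      exact sum_congr rfl fun i _ => by ring
    calc (q : ℝ) * err = |∑ i, (k i : ℝ) * (q * x i - p i)| := by
          rw [← hid, abs_mul, Nat.abs_cast]
      _ ≤ _ := abs_sum_mul_le_card_mul_norm_mul_norm _ _
  calc γ * q ≤ err * N ^ s * q := by gcongr
    _ ≤ (K : ℝ) ^ s * (q * err) := by
      rw [mul_comm err, mul_assoc, mul_comm err]; gcongr
    _ ≤ (K : ℝ) ^ s * (Fintype.card ι * (K * ‖fun i => q * x i - p i‖)) :=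
      mul_le_mul_of_nonneg_left (hsim.trans (by gcongr)) (by positivity)
    _ = Fintype.card ι * (K : ℝ) ^ (s + 1) * ‖fun i => q * x i - p i‖ := by
      rw [Real.rpow_add_one (zero_lt_one.trans_le (hN.trans hNK)).ne']
      ring

theorem simultaneous_lower_bound_of_linear_lower_bound (hι : Fintype.card ι ≠ 0)
    {x : ι → ℝ} {γ s : ℝ} (hs : 0 ≤ s)
    (hx : ∀ k : ι → ℤ, k ≠ 0 → ∀ m : ℤ,
      γ * ‖fun i => (k i : ℝ)‖ ^ (-s) ≤ |∑ i, k i * x i - m|)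
    {q : ℕ} (hq : 1 ≤ q) (p : ι → ℤ) :
    γ / (Fintype.card ι * 2 ^ (s + 1)) * (q : ℝ) ^ (1 - (s + 1) / Fintype.card ι) ≤
      ‖fun i => q * x i - p i‖ := by
  obtain ⟨K, hqK, hKq⟩ := exists_nat_lt_succ_pow_le_two_mul_rpow hι hq
  have hq0 : (0 : ℝ) < q := by exact_mod_cast hq
  set d : ℝ := (Fintype.card ι : ℝ)
  have hKpow : (K : ℝ) ^ (s + 1) ≤ 2 ^ (s + 1) * (q : ℝ) ^ ((s + 1) / d) :=
    calc (K : ℝ) ^ (s + 1) ≤ (2 * (q : ℝ) ^ d⁻¹) ^ (s + 1) := by gcongr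
      _ = 2 ^ (s + 1) * (q : ℝ) ^ ((s + 1) / d) := by
        rw [Real.mul_rpow (by norm_num) (by positivity), ← Real.rpow_mul hq0.le, inv_mul_eq_div]
  rw [Real.rpow_sub hq0, Real.rpow_one, div_mul_div_comm, div_le_iff₀ (by positivity)]
  calc γ * q ≤ d * (K : ℝ) ^ (s + 1) * ‖fun i => q * x i - p i‖ :=
        mul_le_card_mul_rpow_mul_norm hs hx hq hqK p
    _ ≤ d * (2 ^ (s + 1) * (q : ℝ) ^ ((s + 1) / d)) * ‖fun i => q * x i - p i‖ := by gcongr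
    _ = ‖fun i => q * x i - p i‖ * (d * 2 ^ (s + 1) * (q : ℝ) ^ ((s + 1) / d)) := by ring

theorem khintchine_transference_general (n : ℕ) (hn : 2 ≤ n) (τ : ℝ) (hτ : 0 ≤ τ)
    (x : Fin (n - 1) → ℝ)
    (hdioph : ∃ γ : ℝ, 0 < γ ∧ ∀ k : Fin (n - 1) → ℤ, k ≠ 0 → ∀ m : ℤ,
      γ * ‖(fun i => (k i : ℝ))‖ ^ (-(1 + τ) * ((n : ℝ) - 1)) ≤
        |(∑ i, (k i : ℝ) * x i) - (m : ℝ)|) :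
    ∃ γb : ℝ, 0 < γb ∧ ∀ q : ℕ, 1 ≤ q → ∀ p : Fin (n - 1) → ℤ,
      γb * (q : ℝ) ^ (-(1 + ((n : ℝ) - 1) * τ) / ((n : ℝ) - 1)) ≤
        ‖(fun i => (q : ℝ) * x i - (p i : ℝ))‖ := by
  obtain ⟨γ, hγ, hx⟩ := hdioph
  have hd : ((n - 1 : ℕ) : ℝ) = (n : ℝ) - 1 := by rw [Nat.cast_sub (by omega), Nat.cast_one]
  have hd0 : (0 : ℝ) < (n : ℝ) - 1 := by rw [← hd]; exact_mod_cast (by omega : 0 < n - 1)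
  set s := (1 + τ) * ((n : ℝ) - 1)
  have hs : 0 ≤ s := by positivity
  have hcard : Fintype.card (Fin (n - 1)) ≠ 0 := by rw [Fintype.card_fin]; omega
  refine ⟨γ / (((n : ℝ) - 1) * 2 ^ (s + 1)), by positivity, fun q hq p => ?_⟩
  have key := simultaneous_lower_bound_of_linear_lower_bound hcard hs
    (by simpa only [neg_mul] using hx) hq p
  rw [Fintype.card_fin, hd] at key
  convert key using 3
  field_simp
  ring

/-- **Khintchine transference (particular case).** If `x ∈ [-1,1]^{n-1}` is
Diophantine in the linear sense (`‖k·x‖_ℤ ≥ γ |k|^{-(1+τ)(n-1)}` for all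
nonzero integer vectors `k`), then it is Diophantine in the simultaneous
sense: there is `γ̄ > 0` with `‖q x‖_{ℤ^{n-1}} ≥ γ̄ q^{-(1+(n-1)τ)/(n-1)}`
for all positive integers `q`. -/
theorem khintchine_transference (n : ℕ) (hn : 2 ≤ n) (τ : ℝ) (hτ : 0 ≤ τ)
    (x : Fin (n - 1) → ℝ) (hx : ∀ i, x i ∈ Set.Icc (-1 : ℝ) 1)
    (hdioph : ∃ γ : ℝ, 0 < γ ∧ ∀ k : Fin (n - 1) → ℤ, k ≠ 0 → ∀ m : ℤ,
      γ * ‖(fun i => (k i : ℝ))‖ ^ (-(1 + τ) * ((n : ℝ) - 1)) ≤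
        |(∑ i, (k i : ℝ) * x i) - (m : ℝ)|) :
    ∃ γb : ℝ, 0 < γb ∧ ∀ q : ℕ, 1 ≤ q → ∀ p : Fin (n - 1) → ℤ,
      γb * (q : ℝ) ^ (-(1 + ((n : ℝ) - 1) * τ) / ((n : ℝ) - 1)) ≤
        ‖(fun i => (q : ℝ) * x i - (p i : ℝ))‖ :=
  khintchine_transference_general n hn τ hτ x hdioph
end
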